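/- Let B ∈ ℝ^{n×m} and D ∈ ℝ^{m×m} be nonnegative matrices with D Schur-Cohn stable, and for s ∈ {1,…,N} let A^(s) ∈ ℝ^{n×n} be Metzler and C^(s) ∈ ℝ^{m×n} be nonnegative. Suppose there exists ν ∈ ℝ^n with ν ≫ 0 such that (A^(s) + B(I − D)^{-1}C^(s))^T ν ≪ 0 for all s ∈ {1,…,N}. Then there exist μ ∈ ℝ^m with μ ≫ 0 and β > 0 such that B^T ν + (D − I)^T μ ≪ 0 and (A^(s))^T ν + (C^(s))^T μ ≤ −βe for all s ∈ {1,…,N}, where e is the all-ones vector. -/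

import Mathlib

open Matrix

attribute [local instance] Matrix.linftyOpNormedAddCommGroup Matrix.linftyOpNormedRing
  Matrix.linftyOpNormedAlgebra Matrix.linftyOpNormedSpace

namespace Stmt11Aux

variable {m : ℕ}

lemma entry_nnnorm_le (M : Matrix (Fin m) (Fin m) ℝ) (i j : Fin m) : ‖M i j‖₊ ≤ ‖M‖₊ := by
  rw [Matrix.linfty_opNNNorm_def]
  exact le_trans
    (Finset.single_le_sum (f := fun j => ‖M i j‖₊) (fun _ _ => zero_le) (Finset.mem_univ j))
    (Finset.le_sup (f := fun i => ∑ j, ‖M i j‖₊) (Finset.mem_univ i))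

lemma entry_continuous (i j : Fin m) :
    Continuous fun M : Matrix (Fin m) (Fin m) ℝ => M i j := by
  refine (LipschitzWith.of_dist_le_mul (K := 1) fun M M' => ?_).continuous
  simp only [NNReal.coe_one, one_mul, dist_eq_norm]
  calc ‖M i j - M' i j‖ = ‖(M - M') i j‖ := by simp [Matrix.sub_apply]
    _ ≤ ‖M - M'‖ := entry_nnnorm_le (M - M') i j

lemma mul_nonneg_entries {M P : Matrix (Fin m) (Fin m) ℝ}
    (hM : ∀ i j, 0 ≤ M i j) (hP : ∀ i j, 0 ≤ P i j) : ∀ i j, 0 ≤ (M * P) i j := by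
  intro i j
  rw [Matrix.mul_apply]
  exact Finset.sum_nonneg fun k _ => mul_nonneg (hM i k) (hP k j)

lemma pow_nonneg_entries {M : Matrix (Fin m) (Fin m) ℝ}
    (hM : ∀ i j, 0 ≤ M i j) (k : ℕ) : ∀ i j, 0 ≤ (M ^ k) i j := by
  induction k with
  | zero =>
    intro i j
    rw [pow_zero]
    rcases eq_or_ne i j with rfl | hij
    · simp [Matrix.one_apply_eq]
    · simp [Matrix.one_apply_ne hij]
  | succ k ih =>
    rw [pow_succ]
    exact mul_nonneg_entries ih hM

lemma norm_map_complex (M : Matrix (Fin m) (Fin m) ℝ) :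
    ‖M.map (algebraMap ℝ ℂ)‖₊ = ‖M‖₊ := by
  rw [Matrix.linfty_opNNNorm_def, Matrix.linfty_opNNNorm_def]
  congr 1
  funext i
  congr 1
  funext j
  simp [Matrix.map_apply, Complex.nnnorm_real]

/-- Neumann series facts for `1 - E` when `‖E‖ < 1` and `E` has nonnegative entries. -/
lemma neumann {E : Matrix (Fin m) (Fin m) ℝ} (hE : ∀ i j, 0 ≤ E i j) (h1 : ‖E‖ < 1) :
    (∀ i j, 0 ≤ (1 - E)⁻¹ i j) ∧ (1 - E) * (1 - E)⁻¹ = 1 ∧ (1 - E)⁻¹ * (1 - E) = 1 := by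
  haveI : CompleteSpace (Matrix (Fin m) (Fin m) ℝ) := FiniteDimensional.complete ℝ _
  have hu : IsUnit (1 - E) := isUnit_one_sub_of_norm_lt_one h1
  have hud : IsUnit (1 - E).det := (Matrix.isUnit_iff_isUnit_det _).mp hu
  refine ⟨?_, Matrix.mul_nonsing_inv _ hud, Matrix.nonsing_inv_mul _ hud⟩
  intro i j
  have hs : HasSum (fun k => E ^ k) (Ring.inverse (1 - E)) := hasSum_geom_series_inverse E h1
  have hφ : HasSum (fun k => (E ^ k) i j) ((Ring.inverse (1 - E)) i j) :=
    hs.map (AddMonoidHom.mk' (fun M : Matrix (Fin m) (Fin m) ℝ => M i j)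
      (fun a b => rfl)) (entry_continuous i j)
  rw [Matrix.nonsing_inv_eq_ringInverse]
  exact hφ.nonneg fun k => pow_nonneg_entries hE k i j

end Stmt11Aux

open Stmt11Aux

/-- Algebraic core of Corollary 3.2 (switching only in the differential part): with `B`,
`D` nonnegative, `D` Schur-Cohn stable, `A s` Metzler, `C s` nonnegative, and a strictly
positive `ν` with `(A s + B (I − D)⁻¹ C s)ᵀ ν ≪ 0` for all `s`, there exist `μ ≫ 0` and
`β > 0` with `Bᵀ ν + (D − I)ᵀ μ ≪ 0` and `(A s)ᵀ ν + (C s)ᵀ μ ≤ -β e` for all `s`. -/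
theorem stmt_11 {n m N : ℕ}
    (B : Matrix (Fin n) (Fin m) ℝ) (D : Matrix (Fin m) (Fin m) ℝ)
    (A : Fin N → Matrix (Fin n) (Fin n) ℝ)
    (C : Fin N → Matrix (Fin m) (Fin n) ℝ)
    (hB : ∀ i j, 0 ≤ B i j) (hD : ∀ i j, 0 ≤ D i j)
    (hSchur : ∀ z ∈ spectrum ℂ (D.map (algebraMap ℝ ℂ)), ‖z‖ < 1)
    (hA : ∀ s i j, i ≠ j → 0 ≤ A s i j)
    (hC : ∀ s i j, 0 ≤ C s i j)
    (ν : Fin n → ℝ) (hν : ∀ i, 0 < ν i)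
    (h : ∀ s i, (((A s + B * (1 - D)⁻¹ * C s)ᵀ) *ᵥ ν) i < 0) :
    ∃ (μ : Fin m → ℝ) (β : ℝ), (∀ i, 0 < μ i) ∧ 0 < β ∧
      (∀ i, (Bᵀ *ᵥ ν) i + (((D - 1)ᵀ) *ᵥ μ) i < 0) ∧
      (∀ s i, ((A s)ᵀ *ᵥ ν) i + ((C s)ᵀ *ᵥ μ) i ≤ -β) := by
  haveI : CompleteSpace (Matrix (Fin m) (Fin m) ℂ) := FiniteDimensional.complete ℂ _
  -- Step 1: some power of D has norm < 1
  obtain ⟨K, hKnorm⟩ : ∃ K : ℕ, ‖D ^ K‖ < 1 := by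
    rcases Nat.eq_zero_or_pos m with hm | hm
    · subst hm
      refine ⟨1, ?_⟩
      have : D = 0 := by ext i; exact i.elim0
      simp [this]
    · haveI : Nonempty (Fin m) := Fin.pos_iff_nonempty.mp hm
      set D' := D.map (algebraMap ℝ ℂ) with hD'
      have hρ : spectralRadius ℂ D' < (1 : NNReal) := by
        refine spectrum.spectralRadius_lt_of_forall_lt D' fun z hz => ?_
        have := hSchur z hz
        rw [← NNReal.coe_lt_coe, coe_nnnorm]
        exact this
      have htend := spectrum.pow_nnnorm_pow_one_div_tendsto_nhds_spectralRadius D'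
      have hev := htend.eventually_lt_const (by exact_mod_cast hρ)
      obtain ⟨k, hk⟩ := (hev.and (Filter.eventually_ge_atTop 1)).exists
      refine ⟨k, ?_⟩
      have hk1 : (‖D' ^ k‖₊ : ENNReal) < 1 := by
        by_contra hcon
        push_neg at hcon
        have h2 : (1 : ENNReal) ≤ (‖D' ^ k‖₊ : ENNReal) ^ (1 / (k : ℝ)) := by
          calc (1 : ENNReal) = 1 ^ (1 / (k : ℝ)) := (ENNReal.one_rpow _).symm
            _ ≤ (‖D' ^ k‖₊ : ENNReal) ^ (1 / (k : ℝ)) :=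
              ENNReal.rpow_le_rpow hcon (by positivity)
        exact absurd hk.1 (not_lt.mpr h2)
      have hDk : D' ^ k = (D ^ k).map (algebraMap ℝ ℂ) := by
        rw [hD', ← RingHom.mapMatrix_apply, ← RingHom.mapMatrix_apply, map_pow]
      rw [← coe_nnnorm, ← norm_map_complex (D ^ k), ← hDk]
      exact_mod_cast hk1
  -- Step 2: (1 - D)⁻¹ is nonnegative with diagonal ≥ 1
  set M := (1 - D)⁻¹ with hMdef
  obtain ⟨hFnn, hFr, hFl⟩ := neumann (pow_nonneg_entries hD K) hKnorm
  set S : Matrix (Fin m) (Fin m) ℝ := ∑ i ∈ Finset.range K, D ^ i with hSdef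
  have hSnn : ∀ i j, 0 ≤ S i j := by
    intro i j
    rw [hSdef, Matrix.sum_apply]
    exact Finset.sum_nonneg fun k _ => pow_nonneg_entries hD k i j
  have hcommS : (1 - D) * S = S * (1 - D) := by
    have hc : Commute D S := by
      rw [hSdef]
      exact Commute.sum_right _ _ _ fun i _ => (Commute.refl D).pow_right i
    exact ((Commute.one_left S).sub_left hc).eq
  have hgeom : S * (1 - D) = 1 - D ^ K := by
    have hgs := geom_sum_mul D K
    rw [hSdef]
    have : (∑ i ∈ Finset.range K, D ^ i) * (1 - D) = -((∑ i ∈ Finset.range K, D ^ i) * (D - 1)) :=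
      by noncomm_ring
    rw [this, hgs]
    noncomm_ring
  have hleft : (1 - D) * (S * (1 - D ^ K)⁻¹) = 1 := by
    rw [← mul_assoc, hcommS, hgeom, hFr]
  have hM_eq : M = S * (1 - D ^ K)⁻¹ := Matrix.inv_eq_right_inv hleft
  have hM1 : (1 - D) * M = 1 := by rw [hM_eq]; exact hleft
  have hM2 : M * (1 - D) = 1 := mul_eq_one_comm.mp hM1
  have hMnn : ∀ i j, 0 ≤ M i j := hM_eq ▸ mul_nonneg_entries hSnn hFnn
  have hMid : M = 1 + D * M := by
    have h1' : M - D * M = 1 := by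
      calc M - D * M = (1 - D) * M := by noncomm_ring
        _ = 1 := hM1
    exact sub_eq_iff_eq_add.mp h1'
  have hMdiag : ∀ i, (1 : ℝ) ≤ M i i := by
    intro i
    have h0 := mul_nonneg_entries hD hMnn i i
    have : M i i = 1 + (D * M) i i := by
      conv_lhs => rw [hMid]
      simp [Matrix.add_apply, Matrix.one_apply_eq]
    linarith
  -- Step 3: constants
  obtain ⟨δ, hδpos, hδle⟩ :
      ∃ δ : ℝ, 0 < δ ∧ ∀ s i, (((A s + B * M * C s)ᵀ) *ᵥ ν) i ≤ -δ := by
    rcases isEmpty_or_nonempty (Fin N × Fin n) with hE | hNE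
    · exact ⟨1, one_pos, fun s i => (hE.false (s, i)).elim⟩
    · obtain ⟨p, _, hp⟩ := Finset.exists_min_image (Finset.univ : Finset (Fin N × Fin n))
        (fun p => -(((A p.1 + B * M * C p.1)ᵀ) *ᵥ ν) p.2) Finset.univ_nonempty
      refine ⟨-(((A p.1 + B * M * C p.1)ᵀ) *ᵥ ν) p.2, by linarith [h p.1 p.2], fun s i => ?_⟩
      have := hp (s, i) (Finset.mem_univ _)
      simp only at this
      linarith
  obtain ⟨L, hL0, hLle⟩ :
      ∃ L : ℝ, 0 ≤ L ∧ ∀ s i, (((M * C s)ᵀ) *ᵥ (fun _ => (1 : ℝ))) i ≤ L := by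
    rcases isEmpty_or_nonempty (Fin N × Fin n) with hE | hNE
    · exact ⟨0, le_refl 0, fun s i => (hE.false (s, i)).elim⟩
    · obtain ⟨p, _, hp⟩ := Finset.exists_max_image (Finset.univ : Finset (Fin N × Fin n))
        (fun p => (((M * C p.1)ᵀ) *ᵥ (fun _ => (1 : ℝ))) p.2) Finset.univ_nonempty
      refine ⟨max 0 ((((M * C p.1)ᵀ) *ᵥ (fun _ => (1 : ℝ))) p.2), le_max_left _ _, fun s i => ?_⟩
      exact le_trans (hp (s, i) (Finset.mem_univ _)) (le_max_right _ _)
  set ε := δ / (2 * (L + 1)) with hε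
  have hεpos : 0 < ε := div_pos hδpos (by linarith)
  set w : Fin m → ℝ := fun j => (Bᵀ *ᵥ ν) j + ε with hw
  have hBν : ∀ j, 0 ≤ (Bᵀ *ᵥ ν) j := by
    intro j
    simp only [Matrix.mulVec, dotProduct, Matrix.transpose_apply]
    exact Finset.sum_nonneg fun i _ => mul_nonneg (hB i j) (hν i).le
  have hwpos : ∀ j, 0 < w j := fun j => add_pos_of_nonneg_of_pos (hBν j) hεpos
  refine ⟨Mᵀ *ᵥ w, δ / 2, ?_, by linarith, ?_, ?_⟩
  · intro i
    simp only [Matrix.mulVec, dotProduct, Matrix.transpose_apply]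
    refine Finset.sum_pos' (fun j _ => mul_nonneg (hMnn j i) (hwpos j).le)
      ⟨i, Finset.mem_univ i, ?_⟩
    exact mul_pos (lt_of_lt_of_le one_pos (hMdiag i)) (hwpos i)
  · -- first inequality
    have hMD1 : M * (D - 1) = -1 := by
      have : M * (D - 1) = -(M * (1 - D)) := by noncomm_ring
      rw [this, hM2]
    have hkey : ((D - 1)ᵀ) *ᵥ (Mᵀ *ᵥ w) = -w := by
      rw [Matrix.mulVec_mulVec, ← Matrix.transpose_mul, hMD1, Matrix.transpose_neg,
        Matrix.transpose_one, Matrix.neg_mulVec, Matrix.one_mulVec]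
    intro i
    rw [hkey]
    simp only [Pi.neg_apply, hw]
    linarith [hεpos]
  · -- second inequality
    intro s i
    have hCmu : (C s)ᵀ *ᵥ (Mᵀ *ᵥ w)
        = (B * M * C s)ᵀ *ᵥ ν + ε • (((M * C s)ᵀ) *ᵥ (fun _ => (1 : ℝ))) := by
      rw [Matrix.mulVec_mulVec, ← Matrix.transpose_mul]
      have hwsplit : w = (Bᵀ *ᵥ ν) + ε • (fun _ => (1 : ℝ)) := by
        funext j
        simp [hw, Pi.add_apply, Pi.smul_apply, smul_eq_mul]
      rw [hwsplit, Matrix.mulVec_add, Matrix.mulVec_smul]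
      congr 1
      rw [Matrix.mulVec_mulVec, ← Matrix.transpose_mul, ← Matrix.mul_assoc]
    have h1 := hδle s i
    rw [Matrix.transpose_add, Matrix.add_mulVec] at h1
    have h2 : ε * (((M * C s)ᵀ) *ᵥ (fun _ => (1 : ℝ))) i ≤ ε * L :=
      mul_le_mul_of_nonneg_left (hLle s i) hεpos.le
    have h3 : ε * L ≤ δ / 2 := by
      rw [hε, div_mul_eq_mul_div, div_le_div_iff₀ (by linarith) (by norm_num)]
      nlinarith
    rw [hCmu]
    simp only [Pi.add_apply, Pi.smul_apply, smul_eq_mul] at h1 ⊢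
    linarith
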